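/- For the 2-dimensional system x'' = a x'^2 + 2b x' y' + c y'^2, y'' = d x'^2 + 2e x' y' + f y'^2, identified with geodesic equations via Γ^1_{11} = -a, Γ^1_{12} = -b, Γ^1_{22} = -c, Γ^2_{11} = -d, Γ^2_{12} = -e, Γ^2_{22} = -f, the vanishing of the Riemann curvature tensor R^i_{jkl} (formed from these Christoffel symbols) is equivalent to the four conditions: a_y - b_x + be - cd = 0; b_y - c_x + (ac - b^2) + (bf - ce) = 0; d_y - e_x - (ae - bd) - (df - e^2) = 0; (b+f)_x = (a+e)_y. -/

import Mathlib

open scoped BigOperators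

/-- Partial derivative of `f : ℝ² → ℝ` in the `k`-th coordinate direction
(`k = 0` is `x`, `k = 1` is `y`). -/
noncomputable def pd (k : Fin 2) (f : ℝ × ℝ → ℝ) (z : ℝ × ℝ) : ℝ :=
  fderiv ℝ f z (if k = 0 then (1, 0) else (0, 1))

/-- The connection coefficients `Γ^1_{11} = -a`, `Γ^1_{12} = Γ^1_{21} = -b`,
`Γ^1_{22} = -c`, `Γ^2_{11} = -d`, `Γ^2_{12} = Γ^2_{21} = -e`, `Γ^2_{22} = -f`
associated to the system `x'' = a x'² + 2b x'y' + c y'²`,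
`y'' = d x'² + 2e x'y' + f y'²`. -/
def gamma2 (a b c d e f : ℝ × ℝ → ℝ) (i j k : Fin 2) (z : ℝ × ℝ) : ℝ :=
  -(![![![a, b], ![b, c]], ![![d, e], ![e, f]]] i j k z)

/-- The Riemann curvature tensor of a connection `Γ` on (an open subset of) `ℝ²`. -/
noncomputable def riem2 (Γ : Fin 2 → Fin 2 → Fin 2 → ℝ × ℝ → ℝ)
    (i j k l : Fin 2) (z : ℝ × ℝ) : ℝ :=
  pd k (Γ i j l) z - pd l (Γ i j k) z +
    ∑ m, (Γ i m k z * Γ m j l z - Γ i m l z * Γ m j k z)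

lemma pd_neg (k : Fin 2) (g : ℝ × ℝ → ℝ) (z : ℝ × ℝ) : pd k (fun w => -g w) z = -pd k g z := by
  simp [pd, fderiv_neg]

lemma pd_add (k : Fin 2) (g h : ℝ × ℝ → ℝ) (z : ℝ × ℝ) (hg : DifferentiableAt ℝ g z)
    (hh : DifferentiableAt ℝ h z) : pd k (fun w => g w + h w) z = pd k g z + pd k h z := by
  simp [pd, fderiv_fun_add hg hh]

section
variable (a b c d e f : ℝ × ℝ → ℝ)
lemma g000 : gamma2 a b c d e f 0 0 0 = fun z => -a z := rfl
lemma g001 : gamma2 a b c d e f 0 0 1 = fun z => -b z := rfl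
lemma g010 : gamma2 a b c d e f 0 1 0 = fun z => -b z := rfl
lemma g011 : gamma2 a b c d e f 0 1 1 = fun z => -c z := rfl
lemma g100 : gamma2 a b c d e f 1 0 0 = fun z => -d z := rfl
lemma g101 : gamma2 a b c d e f 1 0 1 = fun z => -e z := rfl
lemma g110 : gamma2 a b c d e f 1 1 0 = fun z => -e z := rfl
lemma g111 : gamma2 a b c d e f 1 1 1 = fun z => -f z := rfl
end

/-- For the two-dimensional quadratically semi-linear system regarded as geodesic
equations, the vanishing of the Riemann tensor is equivalent to the four
linearizability conditions. -/
theorem riemann_flat_iff_linearizability_conditions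
    (U : Set (ℝ × ℝ)) (hU : IsOpen U)
    (a b c d e f : ℝ × ℝ → ℝ)
    (ha : ContDiffOn ℝ (⊤ : ℕ∞) a U) (hb : ContDiffOn ℝ (⊤ : ℕ∞) b U) (hc : ContDiffOn ℝ (⊤ : ℕ∞) c U)
    (hd : ContDiffOn ℝ (⊤ : ℕ∞) d U) (he : ContDiffOn ℝ (⊤ : ℕ∞) e U) (hf : ContDiffOn ℝ (⊤ : ℕ∞) f U) :
    (∀ i j k l, ∀ z ∈ U, riem2 (gamma2 a b c d e f) i j k l z = 0) ↔
      (∀ z ∈ U,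
        pd 1 a z - pd 0 b z + b z * e z - c z * d z = 0 ∧
        pd 1 b z - pd 0 c z + (a z * c z - (b z)^2) + (b z * f z - c z * e z) = 0 ∧
        pd 1 d z - pd 0 e z - (a z * e z - b z * d z) - (d z * f z - (e z)^2) = 0 ∧
        pd 0 (fun w => b w + f w) z = pd 1 (fun w => a w + e w) z) := by
  have diff : ∀ g : ℝ × ℝ → ℝ, ContDiffOn ℝ (⊤ : ℕ∞) g U → ∀ z ∈ U, DifferentiableAt ℝ g z := by
    intro g hg z hz
    exact (hg.differentiableOn (by simp)).differentiableAt (hU.mem_nhds hz)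
  constructor
  · intro hR z hz
    have h1 := hR 0 0 0 1 z hz
    have h2 := hR 0 1 0 1 z hz
    have h3 := hR 1 0 0 1 z hz
    have h4 := hR 1 1 0 1 z hz
    simp only [riem2, g000 a b c d e f, g001 a b c d e f, g010 a b c d e f, g011 a b c d e f,
      g100 a b c d e f, g101 a b c d e f, g110 a b c d e f, g111 a b c d e f,
      Fin.sum_univ_two, pd_neg] at h1 h2 h3 h4
    refine ⟨by linear_combination h1, by linear_combination h2, by linear_combination h3, ?_⟩
    rw [pd_add 0 b f z (diff b hb z hz) (diff f hf z hz),
        pd_add 1 a e z (diff a ha z hz) (diff e he z hz)]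
    linear_combination -h1 - h4
  · intro h i j k l z hz
    obtain ⟨h1, h2, h3, h4⟩ := h z hz
    rw [pd_add 0 b f z (diff b hb z hz) (diff f hf z hz),
        pd_add 1 a e z (diff a ha z hz) (diff e he z hz)] at h4
    fin_cases i <;> fin_cases j <;> fin_cases k <;> fin_cases l <;>
      simp only [riem2, g000 a b c d e f, g001 a b c d e f, g010 a b c d e f, g011 a b c d e f,
        g100 a b c d e f, g101 a b c d e f, g110 a b c d e f, g111 a b c d e f,
        Fin.sum_univ_two, pd_neg, Fin.mk_zero, Fin.mk_one] <;>
      ring_nf <;> ring_nf at h1 h2 h3 h4 <;> linarith [h1, h2, h3, h4]
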